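/- Let g : ℝ → M be defined by g(t) = φ_t(p) for t ≤ 0 and g(t) = φ_t(q) for t > 0, where (φ_t) is a flow on a metric space M whose time-τ maps for τ ∈ [0,1] are L-Lipschitz (L ≥ 1). If dist(φ_t(p), φ_t(q)) < d/(L+1) for all t ∈ [-1, 1], then g is a d-pseudo orbit. -/

import Mathlib

/-! Within a single orbit the glued map follows the flow exactly, so the only defect is at the
jump: for `t ≤ 0 < t + τ` it compares `φ_{t+τ} q` with `φ_τ (φ_t p) = φ_{t+τ} p`, and there
`t + τ ∈ [-1, 1]`, where the two orbits are `d/(L+1)`-close. -/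

open Set

theorem glued_orbit_step {M : Type*} (φ : ℝ → M → M) (p q : M) (g : ℝ → M)
    (hg₁ : ∀ t : ℝ, t ≤ 0 → g t = φ t p) (hg₂ : ∀ t : ℝ, 0 < t → g t = φ t q)
    {t τ : ℝ} (hτ : τ ∈ Icc (0 : ℝ) 1) :
    (∃ x, g (t + τ) = φ (t + τ) x ∧ g t = φ t x) ∨
      (t + τ ∈ Icc (-1 : ℝ) 1 ∧ g (t + τ) = φ (t + τ) q ∧ g t = φ t p) := by
  obtain ⟨hτ0, hτ1⟩ := hτ
  rcases le_or_gt t 0 with ht | ht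
  · rcases le_or_gt (t + τ) 0 with hs | hs
    · exact Or.inl ⟨p, hg₁ _ hs, hg₁ _ ht⟩
    · exact Or.inr ⟨⟨by linarith, by linarith⟩, hg₂ _ hs, hg₁ _ ht⟩
  · exact Or.inl ⟨q, hg₂ _ (by linarith), hg₂ _ ht⟩

theorem stmt_17_general {M : Type*} [MetricSpace M] (φ : ℝ → M → M)
    (hφadd : ∀ t s x, φ (t + s) x = φ t (φ s x))
    (L : ℝ) (hL : 1 ≤ L)
    (p q : M) (d : ℝ) (hd : 0 < d) (g : ℝ → M)
    (hg₁ : ∀ t : ℝ, t ≤ 0 → g t = φ t p) (hg₂ : ∀ t : ℝ, 0 < t → g t = φ t q)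
    (hclose : ∀ t ∈ Set.Icc (-1 : ℝ) 1, dist (φ t p) (φ t q) < d / (L + 1)) :
    ∀ t τ : ℝ, τ ∈ Set.Icc (0 : ℝ) 1 → dist (g (t + τ)) (φ τ (g t)) < d := by
  intro t τ hτ
  have hflow : ∀ x, φ τ (φ t x) = φ (t + τ) x := fun x => by rw [← hφadd, add_comm]
  rcases glued_orbit_step φ p q g hg₁ hg₂ hτ with ⟨x, hs, ht⟩ | ⟨hjump, hs, ht⟩
  · rwa [hs, ht, hflow, dist_self]
  · rw [hs, ht, hflow, dist_comm]
    exact (hclose _ hjump).trans_le (div_le_self hd.le (by linarith))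

/-- Concatenating the negative orbit of p with the positive orbit of q, with the two
orbits d/(L+1)-close on [-1,1], yields a d-pseudo orbit. -/
theorem stmt_17 {M : Type*} [MetricSpace M] (φ : ℝ → M → M)
    (hφ0 : ∀ x, φ 0 x = x) (hφadd : ∀ t s x, φ (t + s) x = φ t (φ s x))
    (L : ℝ) (hL : 1 ≤ L)
    (hLip : ∀ τ ∈ Set.Icc (0 : ℝ) 1, ∀ x y : M, dist (φ τ x) (φ τ y) ≤ L * dist x y)
    (p q : M) (d : ℝ) (hd : 0 < d) (g : ℝ → M)
    (hg₁ : ∀ t : ℝ, t ≤ 0 → g t = φ t p) (hg₂ : ∀ t : ℝ, 0 < t → g t = φ t q)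
    (hclose : ∀ t ∈ Set.Icc (-1 : ℝ) 1, dist (φ t p) (φ t q) < d / (L + 1)) :
    ∀ t τ : ℝ, τ ∈ Set.Icc (0 : ℝ) 1 → dist (g (t + τ)) (φ τ (g t)) < d :=
  stmt_17_general φ hφadd L hL p q d hd g hg₁ hg₂ hclose
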